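/- For every integer n ≥ 3 there exists a totally positive n×n real matrix X such that X_{n−2,n}·X_{n,1} − X_{n−1,n}·X_{n−1,1} < 0. (Thus there exists a totally positive matrix at which the Cremmer–Gervais cluster variable ψ₂ is negative, so the Cremmer–Gervais positive locus is strictly contained in the set of totally positive matrices.) -/
import Mathlib


noncomputable section

/-- The n×n shift matrix: S_{i,j} = 1 if j = i + 1 (1-based) and 0 otherwise. -/
def shiftM (n : ℕ) : Matrix (Fin n) (Fin n) ℝ :=
  Matrix.of fun i j => if (i : ℕ) + 1 = (j : ℕ) then 1 else 0

/-- A real square matrix is totally nonnegative if every minor (determinant of a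
square submatrix given by strictly increasing row and column selections) is ≥ 0. -/
def TotallyNonneg {n : ℕ} (A : Matrix (Fin n) (Fin n) ℝ) : Prop :=
  ∀ (k : ℕ) (r c : Fin k → Fin n), StrictMono r → StrictMono c →
    0 ≤ (A.submatrix r c).det

/-- A real square matrix is totally positive if every minor is > 0. -/
def TotallyPos {n : ℕ} (A : Matrix (Fin n) (Fin n) ℝ) : Prop :=
  ∀ (k : ℕ) (r c : Fin k → Fin n), StrictMono r → StrictMono c →
    0 < (A.submatrix r c).det

open Matrix Finset Polynomial in
/-- The determinant of a Cauchy matrix with strictly increasing parameters and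
positive denominators is positive. -/
lemma cauchy_det_pos (k : ℕ) (x y : Fin k → ℝ) (hx : StrictMono x) (hy : StrictMono y)
    (hpos : ∀ i j, 0 < x i + y j) :
    0 < (Matrix.of fun i j => (x i + y j)⁻¹).det := by

  -- polynomials p j (t) = ∏_{m ≠ j} (t + y m)
  set p : Fin k → ℝ[X] := fun j => ∏ m ∈ univ.erase j, (Polynomial.X + Polynomial.C (y m))
    with hp
  have hdeg : ∀ j, (p j).natDegree < k := by
    intro j
    have h1 : (p j).natDegree ≤ ∑ m ∈ univ.erase j, (Polynomial.X + Polynomial.C (y m)).natDegree :=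
      Polynomial.natDegree_prod_le _ _
    simp only [Polynomial.natDegree_X_add_C, Finset.sum_const, smul_eq_mul, mul_one] at h1
    have h2 : (univ.erase j).card = k - 1 := by
      rw [Finset.card_erase_of_mem (Finset.mem_univ j), Finset.card_univ, Fintype.card_fin]
    have hk : 0 < k := j.pos
    omega
  set M : Matrix (Fin k) (Fin k) ℝ := Matrix.of fun l j => (p j).coeff l with hM
  -- Claim 1 : vandermonde x * M = A where A i j = ∏_{m ≠ j} (x i + y m)
  have claim1 : vandermonde x * M = Matrix.of fun i j => ∏ m ∈ univ.erase j, (x i + y m) := by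
    ext i j
    rw [Matrix.mul_apply]
    have := Polynomial.eval_eq_sum_range' (hdeg j) (x i)
    simp only [vandermonde_apply, hM, Matrix.of_apply]
    rw [show (∑ l : Fin k, x i ^ (l : ℕ) * (p j).coeff l) =
        ∑ l ∈ Finset.range k, (p j).coeff l * x i ^ l by
      rw [Finset.sum_range fun l => (p j).coeff l * x i ^ l]
      exact Finset.sum_congr rfl fun l _ => mul_comm _ _]
    rw [← this, hp]
    simp [Polynomial.eval_prod]
  -- Claim 2 : vandermonde (-y) * M is diagonal
  have claim2 : vandermonde (fun i => -(y i)) * M =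
      Matrix.diagonal (fun j => ∏ m ∈ univ.erase j, (y m - y j)) := by
    ext i j
    rw [Matrix.mul_apply]
    have heval : (∑ l : Fin k, (-(y i)) ^ (l : ℕ) * M l j) = (p j).eval (-(y i)) := by
      rw [Polynomial.eval_eq_sum_range' (hdeg j)]
      rw [Finset.sum_range fun l => (p j).coeff l * (-(y i)) ^ l]
      exact Finset.sum_congr rfl fun l _ => mul_comm _ _
    simp only [vandermonde_apply, heval, hp, Polynomial.eval_prod, Polynomial.eval_add,
      Polynomial.eval_X, Polynomial.eval_C]
    by_cases hij : i = j
    · subst hij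
      simp only [Matrix.diagonal_apply_eq]
      exact Finset.prod_congr rfl fun m _ => by ring
    · rw [Matrix.diagonal_apply_ne _ hij]
      exact Finset.prod_eq_zero (Finset.mem_erase.mpr ⟨hij, Finset.mem_univ i⟩) (by ring)
  -- determinant of M
  have hVy : (vandermonde (fun i => -(y i))).det = ∏ i : Fin k, ∏ j ∈ Finset.Ioi i, (y i - y j) := by
    rw [Matrix.det_vandermonde]
    exact Finset.prod_congr rfl fun i _ => Finset.prod_congr rfl fun j _ => by ring
  have hVyne : (vandermonde (fun i => -(y i))).det ≠ 0 := by
    rw [hVy]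
    refine Finset.prod_ne_zero_iff.mpr fun i _ => Finset.prod_ne_zero_iff.mpr fun j hj => ?_
    have : i < j := Finset.mem_Ioi.mp hj
    exact sub_ne_zero.mpr (hy this).ne
  have hdiag : (∏ j : Fin k, ∏ m ∈ univ.erase j, (y m - y j)) =
      (∏ i : Fin k, ∏ j ∈ Finset.Ioi i, (y i - y j)) *
        (∏ i : Fin k, ∏ j ∈ Finset.Ioi i, (y j - y i)) := by
    have key : (∏ j : Fin k, ∏ m ∈ univ.erase j, (y m - y j)) =
        ∏ i : Fin k, ∏ j ∈ Finset.Ioi i, ((y j - y i) * (y i - y j)) := by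
      rw [Finset.prod_prod_Ioi_mul_eq_prod_prod_off_diag (fun a b : Fin k => y a - y b)]
      refine Finset.prod_congr rfl fun i _ => Finset.prod_congr ?_ fun _ _ => rfl
      ext m; simp [Finset.mem_compl, eq_comm]
    rw [key, ← Finset.prod_mul_distrib]
    refine Finset.prod_congr rfl fun i _ => ?_
    rw [← Finset.prod_mul_distrib]
    exact Finset.prod_congr rfl fun j _ => mul_comm _ _
  have hdetM : M.det = ∏ i : Fin k, ∏ j ∈ Finset.Ioi i, (y j - y i) := by
    have h := congrArg Matrix.det claim2
    rw [Matrix.det_mul, Matrix.det_diagonal] at h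
    apply mul_left_cancel₀ hVyne
    rw [h, hVy, hdiag]
  have hdetMpos : 0 < M.det := by
    rw [hdetM]
    refine Finset.prod_pos fun i _ => Finset.prod_pos fun j hj => ?_
    exact sub_pos.mpr (hy (Finset.mem_Ioi.mp hj))
  -- Claim 3 : the Cauchy matrix factors
  set w : Fin k → ℝ := fun i => (∏ m : Fin k, (x i + y m))⁻¹ with hw
  have claim3 : (Matrix.of fun i j => (x i + y j)⁻¹) =
      Matrix.diagonal w * (vandermonde x * M) := by
    rw [claim1]
    ext i j
    rw [Matrix.diagonal_mul, Matrix.of_apply, Matrix.of_apply]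
    show (x i + y j)⁻¹ = (∏ m : Fin k, (x i + y m))⁻¹ * ∏ m ∈ univ.erase j, (x i + y m)
    have hsplit : (∏ m : Fin k, (x i + y m)) = (x i + y j) * ∏ m ∈ univ.erase j, (x i + y m) :=
      (Finset.mul_prod_erase univ _ (Finset.mem_univ j)).symm
    have h1 : (x i + y j) ≠ 0 := (hpos i j).ne'
    have h2 : (∏ m ∈ univ.erase j, (x i + y m)) ≠ 0 :=
      Finset.prod_ne_zero_iff.mpr fun m _ => (hpos i m).ne'
    rw [hsplit, mul_inv]
    field_simp
  have hwpos : ∀ i, 0 < w i := fun i =>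
    inv_pos.mpr (Finset.prod_pos fun m _ => hpos i m)
  have hVx : 0 < (vandermonde x).det := by
    rw [Matrix.det_vandermonde]
    refine Finset.prod_pos fun i _ => Finset.prod_pos fun j hj => ?_
    exact sub_pos.mpr (hx (Finset.mem_Ioi.mp hj))
  rw [claim3, Matrix.det_mul, Matrix.det_mul, Matrix.det_diagonal]
  have hwprod : 0 < ∏ i : Fin k, w i := Finset.prod_pos fun i _ => hwpos i
  exact mul_pos hwprod (mul_pos hVx hdetMpos)

/-- for every n ≥ 3 there is a totally positive n×n real matrix X
with X_{n−2,n}·X_{n,1} − X_{n−1,n}·X_{n−1,1} < 0 (entries in 1-based indexing;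
below the indices are 0-based). -/
theorem statement_18 (n : ℕ) (hn : 3 ≤ n) :
    ∃ X : Matrix (Fin n) (Fin n) ℝ, TotallyPos X ∧
      X ⟨n - 3, by omega⟩ ⟨n - 1, by omega⟩ * X ⟨n - 1, by omega⟩ ⟨0, by omega⟩ -
        X ⟨n - 2, by omega⟩ ⟨n - 1, by omega⟩ * X ⟨n - 2, by omega⟩ ⟨0, by omega⟩ < 0 := by
  set x : Fin n → ℝ := fun i => (i : ℝ) + 1 with hx
  have hxm : StrictMono x := fun i j hij => by
    simp only [hx]
    have h1 : (i : ℕ) < (j : ℕ) := hij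
    have h2 : ((i : ℕ) : ℝ) < ((j : ℕ) : ℝ) := by exact_mod_cast h1
    linarith
  refine ⟨Matrix.of fun i j => (x i + x j)⁻¹, ?_, ?_⟩
  · intro k r c hr hc
    have hsub : ((Matrix.of fun i j => (x i + x j)⁻¹).submatrix r c) =
        Matrix.of fun a b => ((x ∘ r) a + (x ∘ c) b)⁻¹ := rfl
    rw [hsub]
    refine cauchy_det_pos k (x ∘ r) (x ∘ c) (hxm.comp hr) (hxm.comp hc) fun i j => ?_
    have h1 : (0:ℝ) ≤ ((r i : ℕ) : ℝ) := Nat.cast_nonneg _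
    have h2 : (0:ℝ) ≤ ((c j : ℕ) : ℝ) := Nat.cast_nonneg _
    simp only [Function.comp, hx]
    positivity
  · simp only [Matrix.of_apply, hx]
    have e3 : (((⟨n - 3, by omega⟩ : Fin n) : ℕ) : ℝ) = (n : ℝ) - 3 := by
      simp only [Fin.val_mk]
      push_cast [Nat.cast_sub (by omega : 3 ≤ n)]
      ring
    have e2 : (((⟨n - 2, by omega⟩ : Fin n) : ℕ) : ℝ) = (n : ℝ) - 2 := by
      simp only [Fin.val_mk]
      push_cast [Nat.cast_sub (by omega : 2 ≤ n)]
      ring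
    have e1 : (((⟨n - 1, by omega⟩ : Fin n) : ℕ) : ℝ) = (n : ℝ) - 1 := by
      simp only [Fin.val_mk]
      push_cast [Nat.cast_sub (by omega : 1 ≤ n)]
      ring
    have e0 : (((⟨0, by omega⟩ : Fin n) : ℕ) : ℝ) = 0 := by simp
    rw [e3, e2, e1, e0]
    have hn3 : (3:ℝ) ≤ (n:ℝ) := by exact_mod_cast hn
    have hA : (0:ℝ) < ((n:ℝ) - 3 + 1 + ((n:ℝ) - 1 + 1)) := by linarith
    have hB : (0:ℝ) < ((n:ℝ) - 1 + 1 + (0 + 1)) := by linarith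
    have hC : (0:ℝ) < ((n:ℝ) - 2 + 1 + ((n:ℝ) - 1 + 1)) := by linarith
    have hD : (0:ℝ) < ((n:ℝ) - 2 + 1 + (0 + 1)) := by linarith
    rw [sub_neg, ← mul_inv, ← mul_inv]
    apply inv_strictAnti₀
    · positivity
    · nlinarith
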